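/- Let P and Q be probability measures such that D_∞(P‖Q) ≤ ε and D_∞(Q‖P) ≤ ε, where D_∞(P‖Q) = ess sup log(dP/dQ). Then for every α > 1, the Rényi divergence satisfies D_α(P‖Q) ≤ ½·α·ε². -/

import Mathlib

/-!
Write `r = p / q`, which lies in `[e^{-ε}, e^ε]`. The integrand is `r^α q`, and convexity of
`t ↦ t^α` bounds `r^α` by the chord of `t^α` over `[e^{-ε}, e^ε]`. The chord is affine in `r`, and
`∫ r q = ∫ q = 1`, so the integral is at most the chord's value at `t = 1`, which equals
`cosh ((α - 1/2) ε) / cosh (ε / 2)`. Since `tanh t ≤ t`, the function `cosh t · e^{-t²/2}` decreases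
on `[0, ∞)`, so this ratio is at most `exp (((α - 1/2)² - 1/4) ε² / 2) = exp (α (α - 1) ε² / 2)`.
-/

open MeasureTheory Real Set

theorem ConvexOn.le_chord {s : Set ℝ} {f : ℝ → ℝ} (hf : ConvexOn ℝ s f) {x y z : ℝ}
    (hx : x ∈ s) (hz : z ∈ s) (hxy : x ≤ y) (hyz : y ≤ z) :
    (z - x) * f y ≤ (z - y) * f x + (y - x) * f z := by
  rcases hxy.eq_or_lt with rfl | hxy
  · simp
  rcases hyz.eq_or_lt with rfl | hyz
  · simp
  exact hf.secant_mono_aux1 hx hz hxy hyz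

namespace Real

theorem rpow_mul_rpow_one_sub_le_chord {α p q W X : ℝ} (hα : 1 ≤ α) (hW : 0 ≤ W) (hq : 0 ≤ q)
    (hWp : W * q ≤ p) (hpX : p ≤ X * q) :
    (X - W) * (p ^ α * q ^ (1 - α)) ≤ (X * q - p) * W ^ α + (p - W * q) * X ^ α := by
  rcases hq.eq_or_lt with rfl | hq
  · obtain rfl : p = 0 := by linarith
    simp [zero_rpow (by linarith : α ≠ 0)]
  obtain ⟨r, rfl⟩ : ∃ r, p = r * q := ⟨p / q, by field_simp⟩
  have hWr : W ≤ r := le_of_mul_le_mul_right hWp hq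
  have hrX : r ≤ X := le_of_mul_le_mul_right hpX hq
  have hchord := (convexOn_rpow hα).le_chord hW (hW.trans (hWr.trans hrX)) hWr hrX
  have hsplit : (r * q) ^ α * q ^ (1 - α) = r ^ α * q := by
    rw [mul_rpow (hW.trans hWr) hq.le, mul_assoc, ← rpow_add hq]
    simp
  rw [hsplit]
  nlinarith

theorem sinh_le_mul_cosh {t : ℝ} (ht : 0 ≤ t) : sinh t ≤ t * cosh t := by
  have hmono : MonotoneOn (fun s => s * cosh s - sinh s) (Ici 0) := by
    refine monotoneOn_of_deriv_nonneg (convex_Ici 0) (by fun_prop) (by fun_prop) fun s hs => ?_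
    rw [interior_Ici] at hs
    have hd : HasDerivAt (fun s => s * cosh s - sinh s) (s * sinh s) s :=
      (((hasDerivAt_id' s).fun_mul (hasDerivAt_cosh s)).fun_sub
        (hasDerivAt_sinh s)).congr_deriv (by ring)
    rw [hd.deriv]
    exact mul_nonneg hs.out.le (sinh_nonneg_iff.2 hs.out.le)
  simpa using hmono self_mem_Ici ht ht

theorem antitoneOn_cosh_mul_exp_neg_sq :
    AntitoneOn (fun t => cosh t * exp (-(t ^ 2 / 2))) (Ici 0) := by
  refine antitoneOn_of_deriv_nonpos (convex_Ici 0) (by fun_prop) (by fun_prop) fun t ht => ?_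
  rw [interior_Ici] at ht
  have hsq : HasDerivAt (fun t : ℝ => -(t ^ 2 / 2)) (-t) t :=
    ((hasDerivAt_pow 2 t).div_const 2).fun_neg.congr_deriv (by norm_num)
  have hd : HasDerivAt (fun t => cosh t * exp (-(t ^ 2 / 2)))
      ((sinh t - t * cosh t) * exp (-(t ^ 2 / 2))) t :=
    ((hasDerivAt_cosh t).fun_mul hsq.exp).congr_deriv (by ring)
  rw [hd.deriv]
  exact mul_nonpos_of_nonpos_of_nonneg (sub_nonpos.2 (sinh_le_mul_cosh ht.out.le)) (exp_nonneg _)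

theorem cosh_le_cosh_mul_exp {u v : ℝ} (h : |v| ≤ |u|) :
    cosh u ≤ cosh v * exp ((u ^ 2 - v ^ 2) / 2) := by
  have key := antitoneOn_cosh_mul_exp_neg_sq (abs_nonneg v) (abs_nonneg u) h
  simp only [cosh_abs, sq_abs] at key
  calc cosh u = cosh u * exp (-(u ^ 2 / 2)) * exp (u ^ 2 / 2) := by
        rw [mul_assoc, ← exp_add]
        simp
    _ ≤ cosh v * exp (-(v ^ 2 / 2)) * exp (u ^ 2 / 2) := by gcongr
    _ = cosh v * exp ((u ^ 2 - v ^ 2) / 2) := by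
        rw [mul_assoc, ← exp_add]
        ring_nf

theorem exp_chord_eq_cosh_div_cosh {α ε : ℝ} (hε : ε ≠ 0) :
    ((exp ε - 1) * exp (-ε) ^ α + (1 - exp (-ε)) * exp ε ^ α) / (exp ε - exp (-ε))
      = cosh ((α - 1 / 2) * ε) / cosh (ε / 2) := by
  set E := exp (ε / 2)
  set F := exp (α * ε)
  have hE : 0 < E := exp_pos _
  have hF : 0 < F := exp_pos _
  have h1 : exp ε = E ^ 2 := by rw [sq, ← exp_add]; ring_nf
  have h2 : exp (-ε) = (E ^ 2)⁻¹ := by rw [exp_neg, h1]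
  have h3 : exp (-ε) ^ α = F⁻¹ := by rw [← exp_mul, ← exp_neg]; ring_nf
  have h4 : exp ε ^ α = F := by rw [← exp_mul, mul_comm]
  have h5 : cosh ((α - 1 / 2) * ε) = (F / E + E / F) / 2 := by
    rw [cosh_eq, div_eq_mul_inv F, ← exp_neg, ← exp_add, div_eq_mul_inv E, ← exp_neg, ← exp_add]
    ring_nf
  have h6 : cosh (ε / 2) = (E + E⁻¹) / 2 := by rw [cosh_eq, exp_neg]
  have hden : exp ε - exp (-ε) ≠ 0 := by
    rw [sub_ne_zero, Ne, exp_eq_exp]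
    contrapose! hε
    linarith
  rw [div_eq_div_iff hden (cosh_pos _).ne', h3, h4, h5, h6, h2, h1]
  field_simp
  ring

theorem exp_chord_le {α ε : ℝ} (hα : 0 ≤ α * (α - 1)) (hε : ε ≠ 0) :
    ((exp ε - 1) * exp (-ε) ^ α + (1 - exp (-ε)) * exp ε ^ α) / (exp ε - exp (-ε))
      ≤ exp (α * (α - 1) * ε ^ 2 / 2) := by
  have hsq : |ε / 2| ≤ |(α - 1 / 2) * ε| := by
    rw [← sq_le_sq]
    nlinarith [sq_nonneg ε]
  rw [exp_chord_eq_cosh_div_cosh hε, div_le_iff₀ (cosh_pos _)]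
  calc cosh ((α - 1 / 2) * ε)
      ≤ cosh (ε / 2) * exp ((((α - 1 / 2) * ε) ^ 2 - (ε / 2) ^ 2) / 2) :=
        cosh_le_cosh_mul_exp hsq
    _ = exp (α * (α - 1) * ε ^ 2 / 2) * cosh (ε / 2) := by
        rw [mul_comm]
        ring_nf

theorem log_le_of_le_exp {x y : ℝ} (hx : 0 ≤ x) (hy : 0 ≤ y) (h : x ≤ exp y) : log x ≤ y := by
  rcases hx.eq_or_lt with rfl | hx
  · rwa [log_zero]
  · exact (log_le_iff_le_exp hx).2 h

end Real

theorem integral_rpow_mul_rpow_one_sub_le_chord {Ω : Type*} [MeasurableSpace Ω]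
    {ν : Measure Ω} {p q : Ω → ℝ} {α W X : ℝ} (hα : 1 ≤ α) (hW : 0 ≤ W) (hWX : W < X)
    (hq0 : ∀ x, 0 ≤ q x) (hp1 : ∫ x, p x ∂ν = 1) (hq1 : ∫ x, q x ∂ν = 1)
    (hWp : ∀ᵐ x ∂ν, W * q x ≤ p x) (hpX : ∀ᵐ x ∂ν, p x ≤ X * q x) :
    ∫ x, p x ^ α * q x ^ (1 - α) ∂ν ≤ ((X - 1) * W ^ α + (1 - W) * X ^ α) / (X - W) := by
  have hp : Integrable p ν := .of_integral_ne_zero (by simp [hp1])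
  have hq : Integrable q ν := .of_integral_ne_zero (by simp [hq1])
  have hXW : 0 < X - W := sub_pos.2 hWX
  calc ∫ x, p x ^ α * q x ^ (1 - α) ∂ν
      ≤ ∫ x, ((X * q x - p x) * W ^ α + (p x - W * q x) * X ^ α) / (X - W) ∂ν := by
        refine integral_mono_of_nonneg ?_ (by fun_prop) ?_
        · filter_upwards [hWp] with x hx
          exact mul_nonneg (rpow_nonneg ((mul_nonneg hW (hq0 x)).trans hx) _)
            (rpow_nonneg (hq0 x) _)
        · filter_upwards [hWp, hpX] with x h₁ h₂
          rw [le_div_iff₀' hXW]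
          exact rpow_mul_rpow_one_sub_le_chord hα hW (hq0 x) h₁ h₂
    _ = ((X - 1) * W ^ α + (1 - W) * X ^ α) / (X - W) := by
        rw [integral_div, integral_add (by fun_prop) (by fun_prop), integral_mul_const,
          integral_mul_const, integral_sub (by fun_prop) (by fun_prop),
          integral_sub (by fun_prop) (by fun_prop), integral_const_mul, integral_const_mul,
          hp1, hq1]
        ring

theorem renyi_le_of_max_divergence_general {Ω : Type*} [MeasurableSpace Ω]
    (ν : Measure Ω) (p q : Ω → ℝ)
    (hp0 : ∀ x, 0 ≤ p x) (hq0 : ∀ x, 0 ≤ q x)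
    (hp1 : ∫ x, p x ∂ν = 1) (hq1 : ∫ x, q x ∂ν = 1)
    (ε : ℝ) (hε : 0 ≤ ε)
    (hPQ : ∀ᵐ x ∂ν, p x ≤ Real.exp ε * q x)
    (hQP : ∀ᵐ x ∂ν, q x ≤ Real.exp ε * p x)
    (α : ℝ) (hα : 1 < α) :
    (1 / (α - 1)) * Real.log (∫ x, p x ^ α * q x ^ (1 - α) ∂ν)
      ≤ (1 / 2) * α * ε ^ 2 := by
  have hα1 : 0 < α - 1 := sub_pos.2 hα
  set I := ∫ x, p x ^ α * q x ^ (1 - α) ∂ν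
  suffices hI : I ≤ exp (α * (α - 1) * ε ^ 2 / 2) by
    have hI0 : 0 ≤ I :=
      integral_nonneg fun x => mul_nonneg (rpow_nonneg (hp0 x) α) (rpow_nonneg (hq0 x) (1 - α))
    calc 1 / (α - 1) * log I ≤ 1 / (α - 1) * (α * (α - 1) * ε ^ 2 / 2) := by
          gcongr
          exact log_le_of_le_exp hI0 (by positivity) hI
      _ = 1 / 2 * α * ε ^ 2 := by field_simp
  rcases hε.eq_or_lt with rfl | hε
  · have hI : I = ∫ x, p x ∂ν := by
      refine integral_congr_ae ?_
      filter_upwards [hPQ, hQP] with x h₁ h₂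
      rw [exp_zero, one_mul] at h₁ h₂
      rw [le_antisymm h₂ h₁, ← rpow_add' (hp0 x) (by norm_num)]
      simp
    simp [hI, hp1]
  · have hWp : ∀ᵐ x ∂ν, exp (-ε) * q x ≤ p x := by
      filter_upwards [hQP] with x hx
      rwa [exp_neg, inv_mul_le_iff₀ (exp_pos ε)]
    exact (integral_rpow_mul_rpow_one_sub_le_chord hα.le (exp_pos _).le
      (exp_lt_exp.2 (by linarith)) hq0 hp1 hq1 hWp hPQ).trans (exp_chord_le (by nlinarith) hε.ne')

/-- Bun–Steinke Proposition 3.3: if the max divergences in both directions are at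
most ε, then the Rényi divergence of order α satisfies D_α(P‖Q) ≤ ½αε². Here P and
Q are given by densities p and q with respect to a base measure ν, the bound
D_∞(P‖Q) ≤ ε is expressed as p ≤ e^ε q a.e., and
D_α(P‖Q) = (1/(α-1))·log ∫ p^α q^{1-α} dν. -/
theorem renyi_le_of_max_divergence {Ω : Type*} [MeasurableSpace Ω]
    (ν : Measure Ω) (p q : Ω → ℝ) (hp : Measurable p) (hq : Measurable q)
    (hp0 : ∀ x, 0 ≤ p x) (hq0 : ∀ x, 0 ≤ q x)
    (hp1 : ∫ x, p x ∂ν = 1) (hq1 : ∫ x, q x ∂ν = 1)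
    (ε : ℝ) (hε : 0 ≤ ε)
    (hPQ : ∀ᵐ x ∂ν, p x ≤ Real.exp ε * q x)
    (hQP : ∀ᵐ x ∂ν, q x ≤ Real.exp ε * p x)
    (α : ℝ) (hα : 1 < α) :
    (1 / (α - 1)) * Real.log (∫ x, p x ^ α * q x ^ (1 - α) ∂ν)
      ≤ (1 / 2) * α * ε ^ 2 :=
  renyi_le_of_max_divergence_general ν p q hp0 hq0 hp1 hq1 ε hε hPQ hQP α hα
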